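/- arXiv:2112.01615 — 2 statements merged into one kernel-verified Lean document; each statement's English description precedes it below -/
import Mathlib

section
/- Let p be an odd prime, and let k, c, d, A, D be integers with k^2 ≡ c (mod p^3), d ≡ k^3 + ((2k)^{-1} mod p^3)*A*D^2 (mod p^3), and p | D. Then p^3 divides k^4 - 6ck^2 + 8dk - 4*A*D^2 - 3c^2. -/
/-- If `p` is an odd prime, `k^2 ≡ c (mod p^3)`,
`d ≡ k^3 + (2k)^{-1} * A * D^2 (mod p^3)` and `p ∣ D`, then `p^3` divides
the `Y^4`-coefficient `k^4 - 6ck^2 + 8dk - 4AD^2 - 3c^2` of the translated quartic. -/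
theorem a4_divisible (p : ℕ) (hp : p.Prime) (hodd : Odd p)
    (k c d A D u : ℤ)
    (hk2 : k ^ 2 ≡ c [ZMOD (p : ℤ) ^ 3])
    (hu : 2 * k * u ≡ 1 [ZMOD (p : ℤ) ^ 3])
    (hd : d ≡ k ^ 3 + u * A * D ^ 2 [ZMOD (p : ℤ) ^ 3])
    (hD : (p : ℤ) ∣ D) :
    ((p : ℤ) ^ 3) ∣ (k ^ 4 - 6 * c * k ^ 2 + 8 * d * k - 4 * A * D ^ 2 - 3 * c ^ 2) := by
  obtain ⟨x, hx⟩ := hk2.dvd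
  obtain ⟨z, hz⟩ := hu.dvd
  obtain ⟨y, hy⟩ := hd.dvd
  exact ⟨-4 * A * D ^ 2 * z - 12 * x * k ^ 2 - 8 * y * k - 3 * (p:ℤ)^3 * x ^ 2,
    by linear_combination (-6*k^2 - 3*(p:ℤ)^3*x - 3*k^2 - 3*c) * hx - 8*k*hy - 4*A*D^2*hz⟩
end

section
/- Let D be a squarefree positive integer and let r, s, t be integers with gcd(r, s) = 1 and r*(r + s*D)*(r - s*D) = t^2. Let D_0 = gcd(r, D). Then D_0^2 divides t. -/
theorem Squarefree.sq_dvd_of_pow_three_dvd_sq {R : Type*} [CommMonoidWithZero R]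
    [IsCancelMulZero R] [DecompositionMonoid R] {d t : R} (hd : Squarefree d)
    (h : d ^ 3 ∣ t ^ 2) : d ^ 2 ∣ t := by
  rcases eq_or_ne d 0 with rfl | hd0
  · simp_all
  obtain ⟨u, rfl⟩ : d ∣ t :=
    (hd.dvd_pow_iff_dvd two_ne_zero).mp ((dvd_pow_self d three_ne_zero).trans h)
  have hdu : d ∣ u ^ 2 := by
    rw [pow_succ, mul_pow] at h
    exact (mul_dvd_mul_iff_left (pow_ne_zero 2 hd0)).mp h
  rw [sq]
  exact mul_dvd_mul_left d ((hd.dvd_pow_iff_dvd two_ne_zero).mp hdu)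

theorem gcd_sq_dvd_general (D r s t : ℤ) (hsf : Squarefree D)
    (ht : r * (r + s * D) * (r - s * D) = t ^ 2) :
    ((Int.gcd r D : ℤ)) ^ 2 ∣ t := by
  set d : ℤ := (Int.gcd r D : ℤ)
  have hdr : d ∣ r := Int.gcd_dvd_left r D
  have hdD : d ∣ D := Int.gcd_dvd_right r D
  have hd3 : d ^ 3 ∣ t ^ 2 := by
    rw [← ht, pow_succ, sq]
    exact mul_dvd_mul (mul_dvd_mul hdr (hdr.add (hdD.mul_left s))) (hdr.sub (hdD.mul_left s))
  exact (hsf.squarefree_of_dvd hdD).sq_dvd_of_pow_three_dvd_sq hd3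

/-- Descent step: if `gcd(r,s) = 1`, `D` is squarefree positive and
`r(r+sD)(r-sD) = t^2`, then `gcd(r,D)^2 ∣ t`. -/
theorem gcd_sq_dvd (D r s t : ℤ) (hD : 0 < D) (hsf : Squarefree D)
    (hrs : IsCoprime r s)
    (ht : r * (r + s * D) * (r - s * D) = t ^ 2) :
    ((Int.gcd r D : ℤ)) ^ 2 ∣ t :=
  gcd_sq_dvd_general D r s t hsf ht
end
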